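/- arXiv:1709.06789 — 3 statements merged into one kernel-verified Lean document; each statement's English description precedes it below -/
import Mathlib

section
/- (Lower semimodularity of δ) Let D be a finite simple matroid of rank at most 3 and let A, B, C ⊆ D with B ⊆ C and A ∩ C = ∅. Define δ(X) = |X| - Σ_{ℓ ∈ L(X)} (|ℓ| - 2) where L(X) is the set of lines of the submatroid induced on X. Then δ(A∪B) - δ(B) ≥ δ(A∪C) - δ(C). -/
open scoped Classical

/-- A simple matroid of rank ≤ 3 presented as a 3-hypergraph `(V, R)`:
`R` is irreflexive, symmetric, and satisfies the exchange axiom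
(if `R a b c` and `R a b d` then `{a,b,c,d}` is an `R`-clique). -/
structure PlaneGeom (V : Type) where
  R : V → V → V → Prop
  irrefl : ∀ a b c, R a b c → a ≠ b ∧ b ≠ c ∧ a ≠ c
  symm₁ : ∀ a b c, R a b c → R b a c
  symm₂ : ∀ a b c, R a b c → R a c b
  exchange : ∀ a b c d, R a b c → R a b d → c ≠ d → R a c d

/-- A line `ℓ` is based in `B` if it contains at least two points of `B`. -/
def BasedIn {V : Type} [DecidableEq V] (ℓ B : Finset V) : Prop := 2 ≤ (ℓ ∩ B).card

namespace PlaneGeom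

variable {V : Type} [Fintype V] [DecidableEq V] (G : PlaneGeom V)

/-- A set of pairwise collinear points. -/
def IsClique (s : Finset V) : Prop :=
  ∀ a ∈ s, ∀ b ∈ s, ∀ c ∈ s, a ≠ b → b ≠ c → a ≠ c → G.R a b c

/-- A (nontrivial) line of the submatroid induced on `X`: a maximal
`R`-clique in `X` of size at least 3. -/
def IsLine (X ℓ : Finset V) : Prop :=
  ℓ ⊆ X ∧ 3 ≤ ℓ.card ∧ G.IsClique ℓ ∧
    ∀ p ∈ X, p ∉ ℓ → ¬ G.IsClique (insert p ℓ)

/-- The set of nontrivial lines of the submatroid induced on `X`. -/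
noncomputable def lines (X : Finset V) : Finset (Finset V) :=
  Finset.univ.filter (fun ℓ => G.IsLine X ℓ)

/-- The predimension function `δ(X) = |X| - Σ_{ℓ ∈ L(X)} (|ℓ| - 2)`. -/
noncomputable def delta (X : Finset V) : ℤ :=
  (X.card : ℤ) - ∑ ℓ ∈ G.lines X, ((ℓ.card : ℤ) - 2)

/-- `A ≤ B` : `A` is a strong substructure of `B`. -/
def Strong (A B : Finset V) : Prop :=
  A ⊆ B ∧ ∀ X : Finset V, A ⊆ X → X ⊆ B → G.delta A ≤ G.delta X

/-- Membership in the class `K₀`: hereditarily nonnegative `δ`. -/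
def InK0 (A : Finset V) : Prop := ∀ A' ⊆ A, 0 ≤ G.delta A'

/-- `B` is a primitive strong extension of `A`. -/
def Primitive (A B : Finset V) : Prop :=
  G.Strong A B ∧ A ≠ B ∧
    ∀ B₀ : Finset V, A ⊆ B₀ → B₀ ⊆ B → G.Strong A B₀ → G.Strong B₀ B →
      B₀ = A ∨ B₀ = B

end PlaneGeom

namespace PlaneGeom

variable {V : Type} [Fintype V] [DecidableEq V] {G : PlaneGeom V}


set_option linter.unusedSectionVars false


lemma clique_subset {s t : Finset V} (h : s ⊆ t) (ht : G.IsClique t) : G.IsClique s :=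
  fun a ha b hb c hc => ht a (h ha) b (h hb) c (h hc)

lemma clique_insert {s : Finset V} (hs : G.IsClique s) {a b p : V}
    (ha : a ∈ s) (hb : b ∈ s) (hab : a ≠ b) (hp : p ∉ s) (hr : G.R a b p) :
    G.IsClique (insert p s) := by
  have hap : a ≠ p := fun h => hp (h ▸ ha)
  have hbp : b ≠ p := fun h => hp (h ▸ hb)
  have step1 : ∀ x ∈ s, x ≠ a → G.R a x p := by
    intro x hx hxa
    by_cases hxb : x = b
    · subst hxb; exact hr
    · have hxp : x ≠ p := fun h => hp (h ▸ hx)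
      have h1 : G.R a b x := hs a ha b hb x hx hab (fun h => hxb h.symm) (fun h => hxa h.symm)
      exact G.symm₂ _ _ _ (G.exchange a b p x hr h1 (fun h => hxp h.symm))
  have step2 : ∀ x ∈ s, ∀ y ∈ s, x ≠ y → G.R p x y := by
    intro x hx y hy hxy
    by_cases hxa : x = a
    · subst hxa
      have := step1 y hy (fun h => hxy h.symm)
      -- G.R x y p → G.R p x y
      exact G.symm₂ _ _ _ (G.symm₁ _ _ _ (G.symm₂ _ _ _ (G.symm₁ _ _ _ this)))
    by_cases hya : y = a
    · subst hya
      have := step1 x hx hxa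
      -- G.R a x p → G.R p x a : R a x p → symm₁ R x a p → symm₂ R x p a → symm₁ R p x a
      exact G.symm₁ _ _ _ (G.symm₂ _ _ _ (G.symm₁ _ _ _ this))
    · have hxp : x ≠ p := fun h => hp (h ▸ hx)
      have hyp : y ≠ p := fun h => hp (h ▸ hy)
      have h1 : G.R x a p := G.symm₁ _ _ _ (step1 x hx hxa)
      have h2 : G.R x a y := G.symm₁ _ _ _ (hs a ha x hx y hy (fun h => hxa h.symm) hxy (fun h => hya h.symm))
      exact G.symm₁ _ _ _ (G.exchange x a p y h1 h2 (fun h => hyp h.symm))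
  intro a' ha' b' hb' c' hc' h1 h2 h3
  rcases Finset.mem_insert.mp ha' with ha | ha <;>
    rcases Finset.mem_insert.mp hb' with hb | hb <;>
      rcases Finset.mem_insert.mp hc' with hc | hc
  · exact absurd (ha.trans hb.symm) h1
  · exact absurd (ha.trans hb.symm) h1
  · exact absurd (ha.trans hc.symm) h3
  · subst ha; exact step2 b' hb c' hc h2
  · exact absurd (hb.trans hc.symm) h2
  · subst hb; exact G.symm₁ _ _ _ (step2 a' ha c' hc h3)
  · subst hc; exact G.symm₂ _ _ _ (G.symm₁ _ _ _ (step2 a' ha b' hb h1))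
  · exact hs a' ha b' hb c' hc h1 h2 h3

/-- a point forming a clique with a big subclique joins the whole clique -/
lemma clique_insert_big {m s : Finset V} (hcard : 3 ≤ m.card)
    (hms : m ⊆ s) (hs : G.IsClique s) {p : V} (hp : G.IsClique (insert p m)) :
    G.IsClique (insert p s) := by
  by_cases hps : p ∈ s
  · rwa [Finset.insert_eq_self.mpr hps]
  · obtain ⟨a, ha, b, hb, hab⟩ := Finset.one_lt_card.mp (by omega : 1 < m.card)
    have hap : a ≠ p := fun h => hps (h ▸ hms ha)
    have hbp : b ≠ p := fun h => hps (h ▸ hms hb)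
    have hr : G.R a b p := hp a (Finset.mem_insert_of_mem ha) b (Finset.mem_insert_of_mem hb)
      p (Finset.mem_insert_self _ _) hab hbp hap
    exact clique_insert hs (hms ha) (hms hb) hab hps hr

lemma line_inter {X Y ℓ : Finset V} (hXY : X ⊆ Y) (hl : G.IsLine Y ℓ)
    (hcard : 3 ≤ (ℓ ∩ X).card) : G.IsLine X (ℓ ∩ X) := by
  obtain ⟨hlY, hl3, hlc, hlmax⟩ := hl
  refine ⟨Finset.inter_subset_right, hcard, clique_subset Finset.inter_subset_left hlc, ?_⟩
  intro p hpX hpl hclq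
  have hpℓ : p ∉ ℓ := fun h => hpl (Finset.mem_inter.mpr ⟨h, hpX⟩)
  have : G.IsClique (insert p ℓ) :=
    clique_insert_big hcard Finset.inter_subset_left hlc hclq
  exact hlmax p (hXY hpX) hpℓ this

lemma line_extend {X Y m : Finset V} (hXY : X ⊆ Y) (hm : G.IsLine X m) :
    ∃ ℓ : Finset V, G.IsLine Y ℓ ∧ ℓ ∩ X = m := by
  obtain ⟨hmX, hm3, hmc, hmmax⟩ := hm
  set ℓ : Finset V := Y.filter (fun p => G.IsClique (insert p m)) with hℓdef
  have hmem : ∀ p, p ∈ ℓ ↔ p ∈ Y ∧ G.IsClique (insert p m) := by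
    intro p; simp [hℓdef]
  have hmℓ : m ⊆ ℓ := by
    intro q hq
    exact (hmem q).mpr ⟨hXY (hmX hq), by rwa [Finset.insert_eq_self.mpr hq]⟩
  have hℓY : ℓ ⊆ Y := Finset.filter_subset _ _
  have hclq : G.IsClique ℓ := by
    intro x hx y hy z hz hxy hyz hxz
    obtain ⟨-, hxc⟩ := (hmem x).mp hx
    obtain ⟨-, hyc⟩ := (hmem y).mp hy
    obtain ⟨-, hzc⟩ := (hmem z).mp hz
    have h1 : G.IsClique (insert x m) := hxc
    have h2 : G.IsClique (insert y (insert x m)) :=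
      clique_insert_big hm3 (Finset.subset_insert _ _) h1 hyc
    have h3 : G.IsClique (insert z (insert y (insert x m))) :=
      clique_insert_big hm3 ((Finset.subset_insert _ _).trans (Finset.subset_insert _ _)) h2 hzc
    exact h3 x (by simp) y (by simp) z (by simp) hxy hyz hxz
  refine ⟨ℓ, ⟨hℓY, le_trans hm3 (Finset.card_le_card hmℓ), hclq, ?_⟩, ?_⟩
  · intro p hpY hpℓ hpc
    have : G.IsClique (insert p m) :=
      clique_subset (Finset.insert_subset_insert _ hmℓ) hpc
    exact hpℓ ((hmem p).mpr ⟨hpY, this⟩)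
  · apply Finset.Subset.antisymm
    · intro p hp
      obtain ⟨hpℓ, hpX⟩ := Finset.mem_inter.mp hp
      obtain ⟨-, hpc⟩ := (hmem p).mp hpℓ
      by_contra hpm
      exact hmmax p hpX hpm hpc
    · exact Finset.subset_inter hmℓ hmX

lemma line_eq_of_big_inter {Y ℓ₁ ℓ₂ : Finset V} (h1 : G.IsLine Y ℓ₁) (h2 : G.IsLine Y ℓ₂)
    (hcard : 3 ≤ (ℓ₁ ∩ ℓ₂).card) : ℓ₁ = ℓ₂ := by
  have key : ∀ ℓ₁ ℓ₂ : Finset V, G.IsLine Y ℓ₁ → G.IsLine Y ℓ₂ → 3 ≤ (ℓ₁ ∩ ℓ₂).card →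
      ℓ₂ ⊆ ℓ₁ := by
    intro ℓ₁ ℓ₂ h1 h2 hcard p hp
    by_contra hpℓ₁
    have hclq : G.IsClique (insert p (ℓ₁ ∩ ℓ₂)) :=
      clique_subset (Finset.insert_subset (by exact hp) Finset.inter_subset_right) h2.2.2.1
    have : G.IsClique (insert p ℓ₁) :=
      clique_insert_big hcard Finset.inter_subset_left h1.2.2.1 hclq
    exact h1.2.2.2 p (h2.1 hp) hpℓ₁ this
  exact Finset.Subset.antisymm
    (key ℓ₂ ℓ₁ h2 h1 (by rwa [Finset.inter_comm]))
    (key ℓ₁ ℓ₂ h1 h2 hcard)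

lemma sum_lines_eq {X Y : Finset V} (hXY : X ⊆ Y) :
    ∑ m ∈ G.lines X, ((m.card : ℤ) - 2) =
      ∑ ℓ ∈ G.lines Y, max (((ℓ ∩ X).card : ℤ) - 2) 0 := by
  have hLX : ∀ m, m ∈ G.lines X ↔ G.IsLine X m := by
    intro m; simp [lines]
  have hLY : ∀ ℓ, ℓ ∈ G.lines Y ↔ G.IsLine Y ℓ := by
    intro ℓ; simp [lines]
  have hsplit : ∑ ℓ ∈ G.lines Y, max (((ℓ ∩ X).card : ℤ) - 2) 0 =
      ∑ ℓ ∈ (G.lines Y).filter (fun ℓ => 3 ≤ (ℓ ∩ X).card),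
        (((ℓ ∩ X).card : ℤ) - 2) := by
    rw [Finset.sum_filter]
    apply Finset.sum_congr rfl
    intro ℓ _
    by_cases h : 3 ≤ (ℓ ∩ X).card
    · rw [if_pos h]; have : (3:ℤ) ≤ (ℓ ∩ X).card := by exact_mod_cast h
      omega
    · rw [if_neg h]
      have : ((ℓ ∩ X).card : ℤ) ≤ 2 := by
        have : (ℓ ∩ X).card ≤ 2 := by omega
        exact_mod_cast this
      omega
  rw [hsplit]
  symm
  refine Finset.sum_bij (fun ℓ _ => ℓ ∩ X) ?_ ?_ ?_ ?_
  · intro ℓ hℓ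
    rw [Finset.mem_filter] at hℓ
    exact (hLX _).mpr (line_inter hXY ((hLY _).mp hℓ.1) hℓ.2)
  · intro ℓ₁ hℓ₁ ℓ₂ hℓ₂ h
    rw [Finset.mem_filter] at hℓ₁ hℓ₂
    apply line_eq_of_big_inter ((hLY _).mp hℓ₁.1) ((hLY _).mp hℓ₂.1)
    have h' : ℓ₁ ∩ X = ℓ₂ ∩ X := h
    have hsub : ℓ₁ ∩ X ⊆ ℓ₁ ∩ ℓ₂ := by
      intro q hq
      have hq2 : q ∈ ℓ₂ ∩ X := h' ▸ hq
      exact Finset.mem_inter.mpr ⟨(Finset.mem_inter.mp hq).1, (Finset.mem_inter.mp hq2).1⟩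
    exact le_trans hℓ₁.2 (Finset.card_le_card hsub)
  · intro m hm
    obtain ⟨ℓ, hℓ, hℓm⟩ := line_extend hXY ((hLX _).mp hm)
    refine ⟨ℓ, ?_, hℓm⟩
    rw [Finset.mem_filter]
    exact ⟨(hLY _).mpr hℓ, by rw [hℓm]; exact ((hLX _).mp hm).2.1⟩
  · intro ℓ hℓ; rfl


end PlaneGeom



/-- lower semimodularity of `δ`: if `B ⊆ C` and `A ∩ C = ∅`
inside an ambient finite simple rank ≤ 3 matroid, then
`δ(A ∪ B) - δ(B) ≥ δ(A ∪ C) - δ(C)`. -/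
theorem stmt_3 {V : Type} [Fintype V] [DecidableEq V] (G : PlaneGeom V)
    (A B C : Finset V) (hBC : B ⊆ C) (hAC : Disjoint A C) :
    G.delta (A ∪ C) - G.delta C ≤ G.delta (A ∪ B) - G.delta B := by
  classical
  have hAB : Disjoint A B := hAC.mono_right hBC
  have hB : B ⊆ A ∪ C := hBC.trans Finset.subset_union_right
  have hABs : A ∪ B ⊆ A ∪ C := Finset.union_subset_union_right hBC
  have hC : C ⊆ A ∪ C := Finset.subset_union_right
  have e1 := PlaneGeom.sum_lines_eq (G := G) hB
  have e2 := PlaneGeom.sum_lines_eq (G := G) hABs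
  have e3 := PlaneGeom.sum_lines_eq (G := G) hC
  have e4 := PlaneGeom.sum_lines_eq (G := G) (Finset.Subset.refl (A ∪ C))
  have key : ∀ ℓ ∈ G.lines (A ∪ C),
      max (((ℓ ∩ (A ∪ B)).card : ℤ) - 2) 0 - max (((ℓ ∩ B).card : ℤ) - 2) 0 ≤
      max (((ℓ ∩ (A ∪ C)).card : ℤ) - 2) 0 - max (((ℓ ∩ C).card : ℤ) - 2) 0 := by
    intro ℓ _
    have cardb : (ℓ ∩ (A ∪ B)).card = (ℓ ∩ A).card + (ℓ ∩ B).card := by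
      rw [Finset.inter_union_distrib_left]
      exact Finset.card_union_of_disjoint
        (hAB.mono Finset.inter_subset_right Finset.inter_subset_right)
    have cardc : (ℓ ∩ (A ∪ C)).card = (ℓ ∩ A).card + (ℓ ∩ C).card := by
      rw [Finset.inter_union_distrib_left]
      exact Finset.card_union_of_disjoint
        (hAC.mono Finset.inter_subset_right Finset.inter_subset_right)
    have hbc : (ℓ ∩ B).card ≤ (ℓ ∩ C).card :=
      Finset.card_le_card (Finset.inter_subset_inter (Finset.Subset.refl _) hBC)
    rw [cardb, cardc]
    push_cast
    omega
  have hsum := Finset.sum_le_sum key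
  rw [Finset.sum_sub_distrib, Finset.sum_sub_distrib] at hsum
  have c1 : (A ∪ B).card = A.card + B.card := Finset.card_union_of_disjoint hAB
  have c2 : (A ∪ C).card = A.card + C.card := Finset.card_union_of_disjoint hAC
  simp only [PlaneGeom.delta]
  rw [e1, e2, e3, e4, c1, c2]
  push_cast
  linarith
end

section
/- Let A ≤ B in K₀ be a primitive extension (A ≤ B, A ≠ B, and there is no A ⊊ B₀ ⊊ B with A ≤ B₀ ≤ B). Then either |B - A| = 1, or no point p ∈ B - A is incident with a line based in A. Moreover, in the first case δ(B) - δ(A) ≤ 1. -/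
open scoped Classical

/-! If a point `p ∈ B \ A` lies on a line of `B` through two points `a, b ∈ A`, then adjoining
`p` to `A` either lengthens the line of `A` through `a, b` (if there is one) or creates a new
line through `a, b, p`; either way `δ (insert p A) ≤ δ A`. So `insert p A` lies strongly above
`A` and below `B`, and primitivity forces `insert p A = B`. -/

lemma Finset.sum_add_one_le_sum_of_injOn {ι κ : Type*} [DecidableEq κ] {s : Finset ι}
    {t : Finset κ} {f : ι → κ} {u : ι → ℤ} {v : κ → ℤ} {k : κ}
    (hmaps : Set.MapsTo f s t) (hinj : Set.InjOn f s) (hle : ∀ i ∈ s, u i ≤ v (f i))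
    (hv : ∀ j ∈ t, 0 ≤ v j) (hk : k ∈ t) (hk_pos : 0 < v k)
    (hk_lt : ∀ i ∈ s, f i = k → u i < v k) :
    ∑ i ∈ s, u i + 1 ≤ ∑ j ∈ t, v j := by
  have himage : s.image f ⊆ t := Finset.image_subset_iff.mpr hmaps
  have hsum_image : ∑ j ∈ s.image f, v j = ∑ i ∈ s, v (f i) := Finset.sum_image hinj
  by_cases hk_mem : k ∈ s.image f
  · obtain ⟨m, hm, rfl⟩ := Finset.mem_image.mp hk_mem
    have hlt : ∑ i ∈ s, u i < ∑ i ∈ s, v (f i) :=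
      Finset.sum_lt_sum hle ⟨m, hm, hk_lt m hm rfl⟩
    have : ∑ j ∈ s.image f, v j ≤ ∑ j ∈ t, v j :=
      Finset.sum_le_sum_of_subset_of_nonneg himage fun j hj _ => hv j hj
    omega
  · have hle_sum : ∑ i ∈ s, u i ≤ ∑ i ∈ s, v (f i) := Finset.sum_le_sum hle
    have : ∑ j ∈ insert k (s.image f), v j ≤ ∑ j ∈ t, v j :=
      Finset.sum_le_sum_of_subset_of_nonneg (Finset.insert_subset hk himage)
        fun j hj _ => hv j hj
    rw [Finset.sum_insert hk_mem] at this
    omega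

namespace PlaneGeom

variable {V : Type} {G : PlaneGeom V}

lemma R_perm {a b c : V} (h : G.R a b c) :
    G.R a c b ∧ G.R b a c ∧ G.R b c a ∧ G.R c a b ∧ G.R c b a := by
  have hacb := G.symm₂ _ _ _ h
  have hbac := G.symm₁ _ _ _ h
  have hbca := G.symm₂ _ _ _ hbac
  exact ⟨hacb, hbac, hbca, G.symm₁ _ _ _ hacb, G.symm₁ _ _ _ hbca⟩

lemma IsClique.mono {s t : Finset V} (ht : G.IsClique t) (hst : s ⊆ t) : G.IsClique s :=
  fun a ha b hb c hc => ht a (hst ha) b (hst hb) c (hst hc)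

variable [DecidableEq V]

lemma isClique_triple {a b c : V} (h : G.R a b c) : G.IsClique {a, b, c} := by
  obtain ⟨h₁, h₂, h₃, h₄, h₅⟩ := R_perm h
  intro x hx y hy z hz hxy hyz hxz
  simp only [Finset.mem_insert, Finset.mem_singleton] at hx hy hz
  rcases hx with rfl | rfl | rfl <;> rcases hy with rfl | rfl | rfl <;>
    rcases hz with rfl | rfl | rfl <;> first | assumption | simp at hxy hyz hxz

lemma exists_isLine_superset {X s : Finset V} (hsX : s ⊆ X) (hs : 3 ≤ s.card)
    (hcl : G.IsClique s) : ∃ ℓ, G.IsLine X ℓ ∧ s ⊆ ℓ := by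
  obtain ⟨ℓ, hsℓ, hmax⟩ := Finset.exists_le_maximal (X.powerset.filter G.IsClique)
    (Finset.mem_filter.mpr ⟨Finset.mem_powerset.mpr hsX, hcl⟩)
  obtain ⟨hℓX, hℓcl⟩ := Finset.mem_filter.mp hmax.prop
  refine ⟨ℓ, ⟨Finset.mem_powerset.mp hℓX, hs.trans (Finset.card_le_card hsℓ), hℓcl, ?_⟩, hsℓ⟩
  intro q hqX hqℓ hqcl
  have hmem : insert q ℓ ∈ X.powerset.filter G.IsClique :=
    Finset.mem_filter.mpr
      ⟨Finset.mem_powerset.mpr (Finset.insert_subset hqX (Finset.mem_powerset.mp hℓX)), hqcl⟩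
  exact hqℓ (hmax.le_of_ge hmem (Finset.subset_insert q ℓ) (Finset.mem_insert_self q ℓ))

variable (G) in
noncomputable def extendLine (p : V) (ℓ : Finset V) : Finset V :=
  if G.IsClique (insert p ℓ) then insert p ℓ else ℓ

lemma subset_extendLine (p : V) (ℓ : Finset V) : ℓ ⊆ G.extendLine p ℓ := by
  unfold extendLine
  split_ifs
  · exact Finset.subset_insert p ℓ
  · exact subset_rfl

lemma IsLine.extendLine {X ℓ : Finset V} {p : V} (hℓ : G.IsLine X ℓ) (hp : p ∉ X) :
    G.IsLine (insert p X) (G.extendLine p ℓ) := by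
  obtain ⟨hℓX, hℓ3, hℓcl, hℓmax⟩ := hℓ
  have hpℓ : p ∉ ℓ := fun h => hp (hℓX h)
  unfold PlaneGeom.extendLine
  split_ifs with hext
  · refine ⟨Finset.insert_subset_insert p hℓX, ?_, hext, ?_⟩
    · rw [Finset.card_insert_of_notMem hpℓ]; omega
    · intro q hq hqℓ hqcl
      have hqX : q ∈ X := (Finset.mem_insert.mp hq).resolve_left fun h => hqℓ (h ▸ by simp)
      exact hℓmax q hqX (fun h => hqℓ (Finset.mem_insert_of_mem h))
        (hqcl.mono (Finset.insert_subset_insert q (Finset.subset_insert p ℓ)))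
  · refine ⟨hℓX.trans (Finset.subset_insert p X), hℓ3, hℓcl, ?_⟩
    intro q hq hqℓ hqcl
    rcases Finset.mem_insert.mp hq with rfl | hqX
    · exact hext hqcl
    · exact hℓmax q hqX hqℓ hqcl

variable [Fintype V]

lemma mem_lines {X ℓ : Finset V} : ℓ ∈ G.lines X ↔ G.IsLine X ℓ := by
  simp [lines]

lemma extendLine_injOn {X : Finset V} {p : V} (hp : p ∉ X) :
    Set.InjOn (G.extendLine p) (G.lines X : Set (Finset V)) := by
  have hp_notMem : ∀ ℓ ∈ G.lines X, p ∉ ℓ := fun ℓ hℓ h => hp ((mem_lines.mp hℓ).1 h)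
  intro ℓ₁ h₁ ℓ₂ h₂ heq
  have hp₁ := hp_notMem ℓ₁ h₁
  have hp₂ := hp_notMem ℓ₂ h₂
  unfold PlaneGeom.extendLine at heq
  split_ifs at heq
  · simpa [Finset.erase_insert hp₁, Finset.erase_insert hp₂] using congrArg (·.erase p) heq
  · exact absurd (heq ▸ Finset.mem_insert_self p ℓ₁) hp₂
  · exact absurd (heq ▸ Finset.mem_insert_self p ℓ₂) hp₁
  · exact heq

lemma delta_insert_le {A : Finset V} {p a b : V} (hp : p ∉ A) (ha : a ∈ A) (hb : b ∈ A)
    (hab : a ≠ b) (hR : G.R a b p) : G.delta (insert p A) ≤ G.delta A := by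
  have hpa : p ≠ a := by rintro rfl; exact hp ha
  have hpb : p ≠ b := by rintro rfl; exact hp hb
  have hsub : ({a, b, p} : Finset V) ⊆ insert p A := by
    simp [Finset.insert_subset_iff, ha, hb]
  have hcard : 3 ≤ ({a, b, p} : Finset V).card := by
    rw [Finset.card_insert_of_notMem (by simp [hab, hpa.symm]),
      Finset.card_insert_of_notMem (by simp [hpb.symm])]
    simp
  obtain ⟨L, hL, habpL⟩ := exists_isLine_superset hsub hcard (isClique_triple hR)
  have hpL : p ∈ L := habpL (by simp)
  have hp_notMem : ∀ ℓ ∈ G.lines A, p ∉ ℓ := fun ℓ hℓ h => hp ((mem_lines.mp hℓ).1 h)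
  have hmaps : Set.MapsTo (G.extendLine p) (G.lines A) (G.lines (insert p A)) :=
    fun ℓ hℓ => mem_lines.mpr ((mem_lines.mp hℓ).extendLine hp)
  have hgrow : ∀ ℓ ∈ G.lines A, (ℓ.card : ℤ) - 2 ≤ ((G.extendLine p ℓ).card : ℤ) - 2 :=
    fun ℓ _ => by have := Finset.card_le_card (subset_extendLine (G := G) p ℓ); omega
  have hnonneg : ∀ ℓ ∈ G.lines (insert p A), (0 : ℤ) ≤ (ℓ.card : ℤ) - 2 :=
    fun ℓ hℓ => by have := (mem_lines.mp hℓ).2.1; omega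
  have hL_pos : (0 : ℤ) < (L.card : ℤ) - 2 := by have := hL.2.1; omega
  have hL_grow : ∀ ℓ ∈ G.lines A, G.extendLine p ℓ = L → (ℓ.card : ℤ) - 2 < (L.card : ℤ) - 2 := by
    intro ℓ hℓ hℓL
    have hssub : ℓ ⊂ L := hℓL ▸ Finset.ssubset_iff_subset_ne.mpr
      ⟨subset_extendLine p ℓ, fun h => hp_notMem ℓ hℓ (h ▸ hℓL ▸ hpL)⟩
    have := Finset.card_lt_card hssub
    omega
  have hsum := Finset.sum_add_one_le_sum_of_injOn hmaps (extendLine_injOn hp) hgrow hnonneg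
    (mem_lines.mpr hL) hL_pos hL_grow
  unfold delta
  rw [Finset.card_insert_of_notMem hp]
  push_cast
  omega

lemma Strong.of_subset {A B C : Finset V} (h : G.Strong A B) (hAC : A ⊆ C) (hCB : C ⊆ B) :
    G.Strong A C :=
  ⟨hAC, fun X hAX hXC => h.2 X hAX (hXC.trans hCB)⟩

lemma Strong.of_delta_le {A B C : Finset V} (h : G.Strong A B) (hAC : A ⊆ C) (hCB : C ⊆ B)
    (hδ : G.delta C ≤ G.delta A) : G.Strong C B :=
  ⟨hCB, fun X hCX hXB => hδ.trans (h.2 X (hAC.trans hCX) hXB)⟩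

lemma Primitive.insert_eq {A B : Finset V} {p : V} (h : G.Primitive A B) (hp : p ∈ B \ A)
    (hδ : G.delta (insert p A) ≤ G.delta A) : insert p A = B := by
  obtain ⟨hstrong, -, hmin⟩ := h
  obtain ⟨hpB, hpA⟩ := Finset.mem_sdiff.mp hp
  have hsub : insert p A ⊆ B := Finset.insert_subset hpB hstrong.1
  have hAsub : A ⊆ insert p A := Finset.subset_insert p A
  refine (hmin _ hAsub hsub (hstrong.of_subset hAsub hsub)
    (hstrong.of_delta_le hAsub hsub hδ)).resolve_left fun heq => ?_
  exact hpA (heq ▸ Finset.mem_insert_self p A)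

end PlaneGeom

theorem stmt_10_general {V : Type} [Fintype V] [DecidableEq V] (G : PlaneGeom V)
    (A B : Finset V) (hprim : G.Primitive A B) :
    ((B \ A).card = 1 ∧ G.delta B - G.delta A ≤ 1) ∨
      (∀ p ∈ B \ A, ∀ ℓ : Finset V, G.IsLine B ℓ → BasedIn ℓ A → p ∉ ℓ) := by
  refine or_iff_not_imp_right.mpr fun h => ?_
  push Not at h
  obtain ⟨p, hp, ℓ, hℓ, hbased, hpℓ⟩ := h
  obtain ⟨a, haI, b, hbI, hab⟩ := Finset.one_lt_card.mp hbased
  obtain ⟨haℓ, haA⟩ := Finset.mem_inter.mp haI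
  obtain ⟨hbℓ, hbA⟩ := Finset.mem_inter.mp hbI
  have hpA : p ∉ A := (Finset.mem_sdiff.mp hp).2
  have hR : G.R a b p := hℓ.2.2.1 a haℓ b hbℓ p hpℓ hab
    (by rintro rfl; exact hpA hbA) (by rintro rfl; exact hpA haA)
  have hδ := PlaneGeom.delta_insert_le hpA haA hbA hab hR
  obtain rfl : insert p A = B := hprim.insert_eq hp hδ
  exact ⟨by rw [Finset.insert_sdiff_cancel hpA, Finset.card_singleton], by omega⟩

/-- if `A ≤ B` is a primitive extension in `K₀`, then either
`|B - A| = 1` (in which case `δ(B) - δ(A) ≤ 1`), or no point of `B - A` is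
incident with a line based in `A`. -/
theorem stmt_10 {V : Type} [Fintype V] [DecidableEq V] (G : PlaneGeom V)
    (A B : Finset V) (hB : G.InK0 B) (hprim : G.Primitive A B) :
    ((B \ A).card = 1 ∧ G.delta B - G.delta A ≤ 1) ∨
      (∀ p ∈ B \ A, ∀ ℓ : Finset V, G.IsLine B ℓ → BasedIn ℓ A → p ∉ ℓ) :=
  stmt_10_general G A B hprim
end

section
/- Every subset B of the non-Desarguesian matroid A satisfies δ(B) ≥ 0, where δ(B) = |B| - Σ_{ℓ line of B} (|ℓ| - 2); hence the non-Desarguesian matroid belongs to K₀. -/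
open scoped Classical

/-- The nine 3-point lines of the non-Desarguesian configuration: the ten
points of the Desargues configuration (center `0`, triangles `1,2,3` and
`4,5,6`, perspectivity axis `7,8,9`) with the axis line `{7,8,9}` removed. -/
def ndLines : Finset (Finset (Fin 10)) :=
  { {0, 1, 4}, {0, 2, 5}, {0, 3, 6},
    {1, 2, 9}, {4, 5, 9}, {1, 3, 8},
    {4, 6, 8}, {2, 3, 7}, {5, 6, 7} }

/-- Collinearity in the non-Desarguesian configuration. -/
def ndR (a b c : Fin 10) : Prop :=
  a ≠ b ∧ b ≠ c ∧ a ≠ c ∧ ∃ ℓ ∈ ndLines, a ∈ ℓ ∧ b ∈ ℓ ∧ c ∈ ℓ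

instance (a b c : Fin 10) : Decidable (ndR a b c) := by
  unfold ndR; infer_instance

/-- The non-Desarguesian matroid, as a simple rank ≤ 3 matroid on 10 points. -/
def ndGeom : PlaneGeom (Fin 10) where
  R := ndR
  irrefl := by decide
  symm₁ := by decide
  symm₂ := by decide
  exchange := by decide

lemma nd_card3 : ∀ ℓ ∈ ndLines, ℓ.card = 3 := by
  intro ℓ hℓ; fin_cases hℓ <;> decide

lemma nd_clique : ∀ ℓ ∈ ndLines, ∀ a ∈ ℓ, ∀ b ∈ ℓ, ∀ c ∈ ℓ,
    a ≠ b → b ≠ c → a ≠ c → ndR a b c := by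
  intro ℓ hℓ; fin_cases hℓ <;> decide

lemma nd_unique : ∀ ℓ₁ ∈ ndLines, ∀ ℓ₂ ∈ ndLines, ∀ a b : Fin 10,
    a ≠ b → a ∈ ℓ₁ → b ∈ ℓ₁ → a ∈ ℓ₂ → b ∈ ℓ₂ → ℓ₁ = ℓ₂ := by
  intro ℓ₁ h₁ ℓ₂ h₂; fin_cases h₁ <;> fin_cases h₂ <;> decide

lemma nd_deg : ∀ p : Fin 10, (ndLines.filter (fun ℓ => p ∈ ℓ)).card ≤ 3 :=
  of_decide_eq_true rfl

lemma nd_count (X : Finset (Fin 10)) :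
    (ndLines.filter (fun ℓ => ℓ ⊆ X)).card ≤ X.card := by
  set F := ndLines.filter (fun ℓ => ℓ ⊆ X) with hF
  have key : 3 * F.card ≤ 3 * X.card := by
    calc 3 * F.card = ∑ _ℓ ∈ F, 3 := by
          rw [Finset.sum_const, smul_eq_mul, mul_comm]
      _ = ∑ ℓ ∈ F, ∑ p ∈ X, (if p ∈ ℓ then 1 else 0) := by
          refine Finset.sum_congr rfl fun ℓ hℓ => ?_
          obtain ⟨hℓnd, hℓX⟩ := Finset.mem_filter.mp (hF ▸ hℓ)
          rw [← Finset.card_filter]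
          have hfil : X.filter (fun p => p ∈ ℓ) = ℓ := by
            ext p
            simp only [Finset.mem_filter]
            exact ⟨fun h => h.2, fun h => ⟨hℓX h, h⟩⟩
          rw [hfil, nd_card3 ℓ hℓnd]
      _ = ∑ p ∈ X, ∑ ℓ ∈ F, (if p ∈ ℓ then 1 else 0) := Finset.sum_comm
      _ = ∑ p ∈ X, (F.filter (fun ℓ => p ∈ ℓ)).card :=
          Finset.sum_congr rfl fun p _ => (Finset.card_filter _ _).symm
      _ ≤ ∑ _p ∈ X, 3 := by
          refine Finset.sum_le_sum fun p _ => ?_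
          refine le_trans (Finset.card_le_card ?_) (nd_deg p)
          exact Finset.filter_subset_filter _ (Finset.filter_subset _ _)
      _ = 3 * X.card := by
          rw [Finset.sum_const, smul_eq_mul, mul_comm]
  omega

lemma nd_lines_eq (X : Finset (Fin 10)) :
    ndGeom.lines X = ndLines.filter (fun ℓ => ℓ ⊆ X) := by
  ext ℓ
  simp only [PlaneGeom.lines, Finset.mem_filter, Finset.mem_univ, true_and]
  constructor
  · rintro ⟨hsub, hcard, hclq, _⟩
    -- pick three distinct points of ℓ
    obtain ⟨a, ha, b, hb, hab⟩ := Finset.one_lt_card.mp (by omega : 1 < ℓ.card)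
    have h2 : 0 < (ℓ.erase a |>.erase b).card := by
      rw [Finset.card_erase_of_mem (Finset.mem_erase.mpr ⟨hab.symm, hb⟩),
        Finset.card_erase_of_mem ha]
      omega
    obtain ⟨c, hc⟩ := Finset.card_pos.mp h2
    obtain ⟨hcb, hca, hcℓ⟩ : c ≠ b ∧ c ≠ a ∧ c ∈ ℓ := by
      simp only [Finset.mem_erase] at hc; tauto
    have hR : ndR a b c := hclq a ha b hb c hcℓ hab (Ne.symm hcb) (Ne.symm hca)
    obtain ⟨_, _, _, ℓ', hℓ', haℓ', hbℓ', hcℓ'⟩ := hR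
    have hsub' : ℓ ⊆ ℓ' := by
      intro d hd
      by_cases hda : d = a
      · subst hda; exact haℓ'
      by_cases hdb : d = b
      · subst hdb; exact hbℓ'
      have hR' : ndR a b d := hclq a ha b hb d hd hab (Ne.symm hdb) (Ne.symm hda)
      obtain ⟨_, _, _, ℓ'', hℓ'', haℓ'', hbℓ'', hdℓ''⟩ := hR'
      have := nd_unique ℓ'' hℓ'' ℓ' hℓ' a b hab haℓ'' hbℓ'' haℓ' hbℓ'
      exact this ▸ hdℓ''
    have : ℓ = ℓ' := Finset.eq_of_subset_of_card_le hsub'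
      (by rw [nd_card3 ℓ' hℓ']; omega)
    subst this
    exact ⟨hℓ', hsub⟩
  · rintro ⟨hℓ, hsub⟩
    refine ⟨hsub, by rw [nd_card3 ℓ hℓ], ?_, ?_⟩
    · exact fun a ha b hb c hc h1 h2 h3 => nd_clique ℓ hℓ a ha b hb c hc h1 h2 h3
    · intro p _ hpℓ hclq
      obtain ⟨a, ha, b, hb, hab⟩ := Finset.one_lt_card.mp
        (by rw [nd_card3 ℓ hℓ]; omega : 1 < ℓ.card)
      have hpa : p ≠ a := fun h => hpℓ (h ▸ ha)
      have hpb : p ≠ b := fun h => hpℓ (h ▸ hb)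
      have hR : ndR a b p := hclq a (Finset.mem_insert_of_mem ha)
        b (Finset.mem_insert_of_mem hb) p (Finset.mem_insert_self p ℓ)
        hab (Ne.symm hpb) (Ne.symm hpa)
      obtain ⟨_, _, _, ℓ', hℓ', haℓ', hbℓ', hpℓ'⟩ := hR
      have := nd_unique ℓ' hℓ' ℓ hℓ a b hab haℓ' hbℓ' ha hb
      exact hpℓ (this ▸ hpℓ')

/-- every subset `B` of the non-Desarguesian matroid satisfies
`δ(B) ≥ 0`; i.e. the non-Desarguesian matroid belongs to `K₀`. -/
theorem stmt_13 : ndGeom.InK0 Finset.univ := by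
  intro B _
  unfold PlaneGeom.delta
  rw [nd_lines_eq]
  have hsum : ∑ ℓ ∈ ndLines.filter (fun ℓ => ℓ ⊆ B), ((ℓ.card : ℤ) - 2)
      = (ndLines.filter (fun ℓ => ℓ ⊆ B)).card := by
    rw [Finset.sum_congr rfl (fun ℓ hℓ =>
      show ((ℓ.card : ℤ) - 2) = 1 by rw [nd_card3 ℓ (Finset.mem_filter.mp hℓ).1]; norm_num)]
    simp
  rw [hsum]
  have := nd_count B
  omega
end
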